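/- Suppose H'₄ ≡ 0, i.e. H = H(x₂,x₃) does not depend on x₄. Then for all real constants λ, μ, the hyperplane immersion F(u₁,u₂,u₃) = (u₁,u₂,u₃,λu₂ + μ), defined on V = {u ∈ ℝ³ : u₃ > 0} with unit normal ξ(u) = (−(u₃/β)λ, 0, 0, u₃/β), is a totally geodesic hypersurface of the Siklos metric: hᵢⱼ ≡ 0 on V for all i,j. -/

import Mathlib

open scoped BigOperators

/-- Partial derivative of `f : ℝⁿ → ℝ` in the `i`-th coordinate direction. -/
noncomputable def pd {n : ℕ} (i : Fin n) (f : (Fin n → ℝ) → ℝ) (x : Fin n → ℝ) : ℝ :=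
  deriv (fun t => f (Function.update x i t)) (x i)

/-- Christoffel symbols `Γᵏᵢⱼ` of a metric field `g`. -/
noncomputable def christoffel {n : ℕ} (g : (Fin n → ℝ) → Matrix (Fin n) (Fin n) ℝ)
    (x : Fin n → ℝ) (k i j : Fin n) : ℝ :=
  (1 / 2) * ∑ l, (g x)⁻¹ k l *
    (pd i (fun y => g y l j) x + pd j (fun y => g y l i) x - pd l (fun y => g y i j) x)

/-- `curv g x i j k l` is the `l`-th component of `R(∂ᵢ,∂ⱼ)∂ₖ` at `x`
(convention `R(X,Y) = [∇_X,∇_Y] − ∇_{[X,Y]}`). -/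
noncomputable def curv {n : ℕ} (g : (Fin n → ℝ) → Matrix (Fin n) (Fin n) ℝ)
    (x : Fin n → ℝ) (i j k l : Fin n) : ℝ :=
  pd i (fun y => christoffel g y l j k) x - pd j (fun y => christoffel g y l i k) x
    + ∑ m, (christoffel g x l i m * christoffel g x m j k
        - christoffel g x l j m * christoffel g x m i k)

/-- The Siklos metric with parameter `β` and defining function `H = H(x₂,x₃,x₄)`;
indices `0,1,2,3` correspond to the coordinates `x₁,x₂,x₃,x₄`. -/
noncomputable def siklos (β : ℝ) (H : ℝ → ℝ → ℝ → ℝ) (x : Fin 4 → ℝ) :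
    Matrix (Fin 4) (Fin 4) ℝ :=
  Matrix.of fun i j =>
    if (i = 0 ∧ j = 1) ∨ (i = 1 ∧ j = 0) ∨ (i = 2 ∧ j = 2) ∨ (i = 3 ∧ j = 3) then
      β ^ 2 / x 2 ^ 2
    else if i = 1 ∧ j = 1 then β ^ 2 / x 2 ^ 2 * H (x 1) (x 2) (x 3)
    else 0

/-- `H'₂`. -/
noncomputable def H2 (H : ℝ → ℝ → ℝ → ℝ) (a b c : ℝ) : ℝ := deriv (fun t => H t b c) a
/-- `H'₃`. -/
noncomputable def H3 (H : ℝ → ℝ → ℝ → ℝ) (a b c : ℝ) : ℝ := deriv (fun t => H a t c) b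
/-- `H'₄`. -/
noncomputable def H4 (H : ℝ → ℝ → ℝ → ℝ) (a b c : ℝ) : ℝ := deriv (fun t => H a b t) c
/-- `H''₂₃`. -/
noncomputable def H23 (H : ℝ → ℝ → ℝ → ℝ) (a b c : ℝ) : ℝ := deriv (fun t => H3 H t b c) a
/-- `H''₃₃`. -/
noncomputable def H33 (H : ℝ → ℝ → ℝ → ℝ) (a b c : ℝ) : ℝ := deriv (fun t => H3 H a t c) b
/-- `H''₃₄`. -/
noncomputable def H34 (H : ℝ → ℝ → ℝ → ℝ) (a b c : ℝ) : ℝ := deriv (fun t => H4 H a t c) b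
/-- `H''₄₄`. -/
noncomputable def H44 (H : ℝ → ℝ → ℝ → ℝ) (a b c : ℝ) : ℝ := deriv (fun t => H4 H a b t) c

/-- Ricci tensor `Ricⱼₖ = Σᵢ (R(∂ᵢ,∂ⱼ)∂ₖ)ⁱ` of the Siklos metric. -/
noncomputable def ricci (β : ℝ) (H : ℝ → ℝ → ℝ → ℝ) (x : Fin 4 → ℝ) (j k : Fin 4) : ℝ :=
  ∑ i, curv (siklos β H) x i j k i

/-- Scalar curvature of the Siklos metric. -/
noncomputable def scal (β : ℝ) (H : ℝ → ℝ → ℝ → ℝ) (x : Fin 4 → ℝ) : ℝ :=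
  ∑ j, ∑ k, (siklos β H x)⁻¹ j k * ricci β H x j k

/-- `g(X,Y) = Σᵢⱼ gᵢⱼ Xⁱ Yʲ`. -/
noncomputable def gApply (M : Matrix (Fin 4) (Fin 4) ℝ) (X Y : Fin 4 → ℝ) : ℝ :=
  ∑ i, ∑ j, M i j * X i * Y j

/-- Curvature applied to arbitrary vectors: `R(X,Y)Z = Σᵢⱼₖ XⁱYʲZᵏ R(∂ᵢ,∂ⱼ)∂ₖ`. -/
noncomputable def Rmulti (β : ℝ) (H : ℝ → ℝ → ℝ → ℝ) (x : Fin 4 → ℝ)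
    (X Y Z : Fin 4 → ℝ) (l : Fin 4) : ℝ :=
  ∑ i, ∑ j, ∑ k, X i * Y j * Z k * curv (siklos β H) x i j k l

/-- `Rₐᵦ𝒸𝒹 = g(R(∂ₐ,∂ᵦ)∂𝒹, ∂𝒸)`. -/
noncomputable def Rlow (β : ℝ) (H : ℝ → ℝ → ℝ → ℝ) (x : Fin 4 → ℝ) (a b c d : Fin 4) : ℝ :=
  ∑ l, siklos β H x l c * curv (siklos β H) x a b d l

/-- The Weyl tensor (in dimension 4) of the Siklos metric. -/
noncomputable def weyl (β : ℝ) (H : ℝ → ℝ → ℝ → ℝ) (x : Fin 4 → ℝ) (a b c d : Fin 4) : ℝ :=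
  Rlow β H x a b c d
    - (1 / 2) * (siklos β H x a c * ricci β H x b d - siklos β H x a d * ricci β H x b c
        + siklos β H x b d * ricci β H x a c - siklos β H x b c * ricci β H x a d)
    + scal β H x / 6 *
        (siklos β H x a c * siklos β H x b d - siklos β H x a d * siklos β H x b c)

/-- Coordinate tangent vector `F_{uᵢ}` of an immersion `F : ℝ³ → ℝ⁴`. -/
noncomputable def Fu (F : (Fin 3 → ℝ) → Fin 4 → ℝ) (i : Fin 3) (u : Fin 3 → ℝ) :
    Fin 4 → ℝ := fun k => pd i (fun v => F v k) u

/-- Ambient covariant derivative `DᵢF_{uⱼ}` along `F`, for the Siklos metric. -/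
noncomputable def ambD (β : ℝ) (H : ℝ → ℝ → ℝ → ℝ) (F : (Fin 3 → ℝ) → Fin 4 → ℝ)
    (i j : Fin 3) (u : Fin 3 → ℝ) : Fin 4 → ℝ :=
  fun k => pd i (fun v => Fu F j v k) u
    + ∑ l, ∑ m, christoffel (siklos β H) (F u) k l m * Fu F i u l * Fu F j u m

/-- Second fundamental form `hᵢⱼ = g(DᵢF_{uⱼ}, ξ)` of `F` with unit normal `ξ`. -/
noncomputable def sff (β : ℝ) (H : ℝ → ℝ → ℝ → ℝ) (F ξ : (Fin 3 → ℝ) → Fin 4 → ℝ)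
    (i j : Fin 3) (u : Fin 3 → ℝ) : ℝ :=
  gApply (siklos β H (F u)) (ambD β H F i j u) (ξ u)

/-- Induced metric `ĝᵢⱼ = g(F_{uᵢ}, F_{uⱼ})` of the hypersurface. -/
noncomputable def inducedMetric (β : ℝ) (H : ℝ → ℝ → ℝ → ℝ) (F : (Fin 3 → ℝ) → Fin 4 → ℝ)
    (u : Fin 3 → ℝ) : Matrix (Fin 3) (Fin 3) ℝ :=
  Matrix.of fun i j => gApply (siklos β H (F u)) (Fu F i u) (Fu F j u)

/-- Covariant derivative of the second fundamental form,
`(∇h)ₖᵢⱼ = ∂ₖhᵢⱼ − Σₗ Γ̂ˡₖᵢ hₗⱼ − Σₗ Γ̂ˡₖⱼ hᵢₗ`. -/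
noncomputable def nablah (β : ℝ) (H : ℝ → ℝ → ℝ → ℝ) (F ξ : (Fin 3 → ℝ) → Fin 4 → ℝ)
    (k i j : Fin 3) (u : Fin 3 → ℝ) : ℝ :=
  pd k (fun v => sff β H F ξ i j v) u
    - ∑ l, christoffel (inducedMetric β H F) u l k i * sff β H F ξ l j u
    - ∑ l, christoffel (inducedMetric β H F) u l k j * sff β H F ξ i l u

/-- Mean curvature `(1/3) Σᵢⱼ ĝⁱʲ hᵢⱼ` of the hypersurface. -/
noncomputable def meanCurv (β : ℝ) (H : ℝ → ℝ → ℝ → ℝ) (F ξ : (Fin 3 → ℝ) → Fin 4 → ℝ)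
    (u : Fin 3 → ℝ) : ℝ :=
  (1 / 3) * ∑ i, ∑ j, (inducedMetric β H F u)⁻¹ i j * sff β H F ξ i j u


lemma deriv_invsq (b c : ℝ) (hc : c ≠ 0) : deriv (fun t : ℝ => b / t ^ 2) c = -2 * b / c ^ 3 := by
  have h := ((hasDerivAt_pow 2 c).inv (pow_ne_zero 2 hc)).const_mul b
  rw [show (fun t : ℝ => b / t ^ 2) = fun t => b * (t ^ 2)⁻¹ by funext t; rw [div_eq_mul_inv]]
  rw [show (fun t : ℝ => b * (t ^ 2)⁻¹) = (fun y => b * (fun x : ℝ => x ^ 2)⁻¹ y) from rfl, h.deriv]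
  field_simp
  ring

lemma pd_row0 (β : ℝ) (H : ℝ → ℝ → ℝ → ℝ) (x : Fin 4 → ℝ) (hx : x 2 ≠ 0) (i j : Fin 4) :
    pd i (fun y => siklos β H y 0 j) x =
      if i = 2 ∧ j = 1 then -2 * β ^ 2 / x 2 ^ 3 else 0 := by
  fin_cases i <;> fin_cases j <;>
    simp [pd, siklos, Function.update, deriv_invsq _ _ hx]

lemma pd_row3 (β : ℝ) (H : ℝ → ℝ → ℝ → ℝ) (x : Fin 4 → ℝ) (hx : x 2 ≠ 0) (i j : Fin 4) :
    pd i (fun y => siklos β H y 3 j) x =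
      if i = 2 ∧ j = 3 then -2 * β ^ 2 / x 2 ^ 3 else 0 := by
  fin_cases i <;> fin_cases j <;>
    simp [pd, siklos, Function.update, deriv_invsq _ _ hx]

lemma pd_c0 (β : ℝ) (H : ℝ → ℝ → ℝ → ℝ) (x : Fin 4 → ℝ) (i j : Fin 4) :
    pd 0 (fun y => siklos β H y i j) x = 0 := by
  fin_cases i <;> fin_cases j <;> simp [pd, siklos, Function.update]

lemma pd_c3 (β : ℝ) (H : ℝ → ℝ → ℝ → ℝ) (hH4 : ∀ a b c : ℝ, H4 H a b c = 0)
    (x : Fin 4 → ℝ) (i j : Fin 4) :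
    pd 3 (fun y => siklos β H y i j) x = 0 := by
  have h11 : deriv (fun t => β ^ 2 / x 2 ^ 2 * H (x 1) (x 2) t) (x 3) = 0 := by
    rw [deriv_const_mul_field]
    have := hH4 (x 1) (x 2) (x 3)
    rw [H4] at this
    rw [this, mul_zero]
  fin_cases i <;> fin_cases j <;> simp [pd, siklos, Function.update, h11]

noncomputable def sikInv (β : ℝ) (H : ℝ → ℝ → ℝ → ℝ) (x : Fin 4 → ℝ) :
    Matrix (Fin 4) (Fin 4) ℝ :=
  Matrix.of fun i j =>
    if (i = 0 ∧ j = 1) ∨ (i = 1 ∧ j = 0) ∨ (i = 2 ∧ j = 2) ∨ (i = 3 ∧ j = 3) then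
      x 2 ^ 2 / β ^ 2
    else if i = 0 ∧ j = 0 then -(x 2 ^ 2 / β ^ 2) * H (x 1) (x 2) (x 3)
    else 0

lemma siklos_inv (β : ℝ) (hβ : β ≠ 0) (H : ℝ → ℝ → ℝ → ℝ) (x : Fin 4 → ℝ) (hx : x 2 ≠ 0) :
    (siklos β H x)⁻¹ = sikInv β H x := by
  apply Matrix.inv_eq_right_inv
  ext i j
  fin_cases i <;> fin_cases j <;>
    · simp [Matrix.mul_apply, Fin.sum_univ_four, siklos, sikInv, Matrix.one_apply]
      try field_simp
      try ring

lemma chris1 (β : ℝ) (hβ : β ≠ 0) (H : ℝ → ℝ → ℝ → ℝ) (x : Fin 4 → ℝ) (hx : x 2 ≠ 0)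
    (i j : Fin 4) :
    christoffel (siklos β H) x 1 i j =
      if (i = 1 ∧ j = 2) ∨ (i = 2 ∧ j = 1) then -(1 / x 2) else 0 := by
  rw [christoffel, Fin.sum_univ_four, siklos_inv β hβ H x hx]
  rw [pd_row0 β H x hx i j, pd_row0 β H x hx j i, pd_c0 β H x i j]
  fin_cases i <;> fin_cases j <;>
    · simp [sikInv]
      try field_simp
      try ring

lemma chris3 (β : ℝ) (hβ : β ≠ 0) (H : ℝ → ℝ → ℝ → ℝ)
    (hH4 : ∀ a b c : ℝ, H4 H a b c = 0) (x : Fin 4 → ℝ) (hx : x 2 ≠ 0)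
    (i j : Fin 4) :
    christoffel (siklos β H) x 3 i j =
      if (i = 2 ∧ j = 3) ∨ (i = 3 ∧ j = 2) then -(1 / x 2) else 0 := by
  rw [christoffel, Fin.sum_univ_four, siklos_inv β hβ H x hx]
  rw [pd_row3 β H x hx i j, pd_row3 β H x hx j i, pd_c3 β H hH4 x i j]
  fin_cases i <;> fin_cases j <;>
    · simp [sikInv]
      try field_simp
      try ring

lemma Fu0 (lam mu : ℝ) (u : Fin 3 → ℝ) :
    Fu (fun u => ![u 0, u 1, u 2, lam * u 1 + mu]) 0 u = ![1, 0, 0, 0] := by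
  funext k; fin_cases k <;>
    simp [Fu, pd, Function.update, deriv_const_mul_field]

lemma Fu1 (lam mu : ℝ) (u : Fin 3 → ℝ) :
    Fu (fun u => ![u 0, u 1, u 2, lam * u 1 + mu]) 1 u = ![0, 1, 0, lam] := by
  have h : deriv (fun t : ℝ => lam * t + mu) (u 1) = lam := by
    rw [deriv_add_const, deriv_const_mul_field, deriv_id'', mul_one]
  funext k; fin_cases k <;>
    simp [Fu, pd, Function.update, h]

lemma Fu2 (lam mu : ℝ) (u : Fin 3 → ℝ) :
    Fu (fun u => ![u 0, u 1, u 2, lam * u 1 + mu]) 2 u = ![0, 0, 1, 0] := by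
  funext k; fin_cases k <;>
    simp [Fu, pd, Function.update, deriv_const_mul_field]

/-- if `H'₄ ≡ 0`, the hyperplanes `x₄ = λx₂ + μ` are totally geodesic. -/
theorem stmt_12 (β : ℝ) (hβ : 0 < β) (H : ℝ → ℝ → ℝ → ℝ)
    (hH : ContDiff ℝ (⊤ : ℕ∞) fun p : ℝ × ℝ × ℝ => H p.1 p.2.1 p.2.2)
    (hH4 : ∀ a b c : ℝ, H4 H a b c = 0) (lam mu : ℝ)
    (F ξ : (Fin 3 → ℝ) → Fin 4 → ℝ)
    (hF : F = fun u => ![u 0, u 1, u 2, lam * u 1 + mu])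
    (hξ : ξ = fun u => ![-(u 2 / β) * lam, 0, 0, u 2 / β]) :
    (∀ u : Fin 3 → ℝ, 0 < u 2 →
      gApply (siklos β H (F u)) (ξ u) (ξ u) = 1 ∧
      ∀ i : Fin 3, gApply (siklos β H (F u)) (ξ u) (Fu F i u) = 0) ∧
    (∀ u : Fin 3 → ℝ, 0 < u 2 → ∀ i j : Fin 3, sff β H F ξ i j u = 0) := by
  subst hF hξ
  constructor
  · intro u hu
    have hu' : u 2 ≠ 0 := ne_of_gt hu
    constructor
    · simp [gApply, Fin.sum_univ_four, siklos]
      field_simp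
    · intro i
      fin_cases i <;>
        · simp [gApply, Fin.sum_univ_four, siklos, Fu0, Fu1, Fu2]
          try field_simp
          try ring
  · intro u hu i j
    have hu' : u 2 ≠ 0 := ne_of_gt hu
    have hx : (![u 0, u 1, u 2, lam * u 1 + mu] : Fin 4 → ℝ) 2 ≠ 0 := by simpa using hu'
    fin_cases i <;> fin_cases j <;>
      · simp [sff, gApply, ambD, Fin.sum_univ_four, siklos, Fu0, Fu1, Fu2, pd,
          chris1 β (ne_of_gt hβ) H _ hx, chris3 β (ne_of_gt hβ) H hH4 _ hx]
        try field_simp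
        try ring
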